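/- arXiv:2205.08627 — 2 statements merged into one kernel-verified Lean document; each statement's English description precedes it below -/
import Mathlib

section
/- For every P_𝕊 ∈ 𝒫_𝕊, one has R(P_𝕊) < 1 if and only if there exists x ∈ X with p_S(x_S) > 0 for all S ∈ 𝕊. -/
open Finset

/-- The space `𝒳_S = ∏_{j ∈ S} [m_j]`. -/
abbrev Cell {d : ℕ} (m : Fin d → ℕ) (S : Finset (Fin d)) : Type :=
  ∀ j : {x : Fin d // x ∈ S}, Fin (m j.1)

/-- The full space `𝒳 = ∏_{j=1}^d [m_j]`. -/
abbrev Full {d : ℕ} (m : Fin d → ℕ) : Type := ∀ j, Fin (m j)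

/-- Coordinate projection `x ↦ x_S`. -/
def proj {d : ℕ} (m : Fin d → ℕ) (S : Finset (Fin d)) (x : Full m) : Cell m S :=
  fun j => x j.1

/-- Coordinate projection `𝒳_S → 𝒳_T` for `T ⊆ S`. -/
def projSub {d : ℕ} (m : Fin d → ℕ) {S T : Finset (Fin d)} (h : T ⊆ S) (z : Cell m S) :
    Cell m T :=
  fun j => z ⟨j.1, h j.2⟩

/-- `p` is a probability mass function. -/
def IsPMF {α : Type*} [Fintype α] (p : α → ℝ) : Prop :=
  (∀ x, 0 ≤ p x) ∧ ∑ x, p x = 1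

/-- `p` is a family of probability mass functions indexed by `𝕊`. -/
def IsFamily {d : ℕ} (m : Fin d → ℕ) (𝕊 : Finset (Finset (Fin d)))
    (p : ∀ S : Finset (Fin d), Cell m S → ℝ) : Prop :=
  ∀ S ∈ 𝕊, IsPMF (p S)

/-- The family `P_𝕊` is compatible: there is a joint pmf on `𝒳` with the given margins. -/
def Compatible {d : ℕ} (m : Fin d → ℕ) (𝕊 : Finset (Finset (Fin d)))
    (p : ∀ S : Finset (Fin d), Cell m S → ℝ) : Prop :=
  ∃ q : Full m → ℝ, IsPMF q ∧
    ∀ S ∈ 𝕊, ∀ y : Cell m S, p S y = ∑ x : Full m, if proj m S x = y then q x else 0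

/-- The marginal mass function of `pS` on `𝒳_T`, for `T ⊆ S`. -/
noncomputable def marg {d : ℕ} (m : Fin d → ℕ) {S : Finset (Fin d)} (T : Finset (Fin d)) (h : T ⊆ S)
    (pS : Cell m S → ℝ) (y : Cell m T) : ℝ :=
  ∑ z : Cell m S, if projSub m h z = y then pS z else 0

/-- The family `P_𝕊` is consistent: overlapping margins agree. -/
def Consistent {d : ℕ} (m : Fin d → ℕ) (𝕊 : Finset (Finset (Fin d)))
    (p : ∀ S : Finset (Fin d), Cell m S → ℝ) : Prop :=
  ∀ S₁ ∈ 𝕊, ∀ S₂ ∈ 𝕊, (S₁ ∩ S₂).Nonempty →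
    marg m (S₁ ∩ S₂) inter_subset_left (p S₁) =
      marg m (S₁ ∩ S₂) inter_subset_right (p S₂)

/-- The class `𝒢_𝕊^+`. -/
def GPlus {d : ℕ} (m : Fin d → ℕ) (𝕊 : Finset (Finset (Fin d)))
    (f : ∀ S : Finset (Fin d), Cell m S → ℝ) : Prop :=
  (∀ S ∈ 𝕊, ∀ y, -1 ≤ f S y) ∧ ∀ x : Full m, 0 ≤ ∑ S ∈ 𝕊, f S (proj m S x)

/-- The linear functional `R(P_𝕊, f_𝕊)`. -/
noncomputable def RL {d : ℕ} (m : Fin d → ℕ) (𝕊 : Finset (Finset (Fin d)))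
    (p f : ∀ S : Finset (Fin d), Cell m S → ℝ) : ℝ :=
  -(1 / (𝕊.card : ℝ)) * ∑ S ∈ 𝕊, ∑ y, f S y * p S y

/-- The incompatibility index `R(P_𝕊)`. -/
noncomputable def Rix {d : ℕ} (m : Fin d → ℕ) (𝕊 : Finset (Finset (Fin d)))
    (p : ∀ S : Finset (Fin d), Cell m S → ℝ) : ℝ :=
  sSup {t | ∃ f, GPlus m 𝕊 f ∧ t = RL m 𝕊 p f}

/-- Total variation distance between two mass functions on a finite space. -/
noncomputable def dTV {α : Type*} [Fintype α] (p q : α → ℝ) : ℝ :=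
  sSup {t | ∃ A : Finset α, t = |∑ y ∈ A, (p y - q y)|}


lemma pmf_bound {α : Type*} [Fintype α] {p f : α → ℝ} (hp : IsPMF p)
    (hf : ∀ y, -1 ≤ f y) : -1 ≤ ∑ y, f y * p y := by
  have h : ∑ y, (-1 : ℝ) * p y ≤ ∑ y, f y * p y :=
    Finset.sum_le_sum fun y _ => mul_le_mul_of_nonneg_right (hf y) (hp.1 y)
  have h2 : ∑ y, (-1 : ℝ) * p y = -1 := by
    simp only [neg_one_mul, Finset.sum_neg_distrib, hp.2]
  linarith

lemma pmf_bound' {α : Type*} [Fintype α] [DecidableEq α] {p f : α → ℝ} (hp : IsPMF p)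
    (hf : ∀ y, -1 ≤ f y) (y0 : α) {ε : ℝ} (hε : ε ≤ p y0) :
    ε * f y0 - (1 - ε) ≤ ∑ y, f y * p y := by
  have hsplit : f y0 * p y0 + ∑ y ∈ Finset.univ.erase y0, f y * p y = ∑ y, f y * p y :=
    Finset.add_sum_erase Finset.univ (fun y => f y * p y) (Finset.mem_univ y0)
  have hps : p y0 + ∑ y ∈ Finset.univ.erase y0, p y = 1 := by
    have := Finset.add_sum_erase Finset.univ p (Finset.mem_univ y0)
    rw [hp.2] at this
    exact this
  have h1 : ∑ y ∈ Finset.univ.erase y0, (-1 : ℝ) * p y ≤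
      ∑ y ∈ Finset.univ.erase y0, f y * p y :=
    Finset.sum_le_sum fun y _ => mul_le_mul_of_nonneg_right (hf y) (hp.1 y)
  have h2 : ∑ y ∈ Finset.univ.erase y0, (-1 : ℝ) * p y = -(1 - p y0) := by
    simp only [neg_one_mul, Finset.sum_neg_distrib]
    linarith
  nlinarith [mul_nonneg (sub_nonneg.2 hε) (by linarith [hf y0] : (0:ℝ) ≤ f y0 + 1)]

/-- `R(P_𝕊) < 1` iff there is a point with positive mass under every margin. -/
theorem statement_18 {d : ℕ} (m : Fin d → ℕ) (hm : ∀ j, 0 < m j)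
    (𝕊 : Finset (Finset (Fin d))) (h𝕊 : 𝕊.Nonempty) (hSne : ∀ S ∈ 𝕊, S.Nonempty)
    (p : ∀ S : Finset (Fin d), Cell m S → ℝ) (hp : IsFamily m 𝕊 p) :
    Rix m 𝕊 p < 1 ↔ ∃ x : Full m, ∀ S ∈ 𝕊, 0 < p S (proj m S x) := by
  have hn0 : (0 : ℝ) < (𝕊.card : ℝ) := by exact_mod_cast Finset.card_pos.2 h𝕊
  have hTne : ({t | ∃ f, GPlus m 𝕊 f ∧ t = RL m 𝕊 p f} : Set ℝ).Nonempty := by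
    refine ⟨0, fun _ _ => 0, ⟨fun S _ y => by norm_num, fun x => by simp⟩, ?_⟩
    simp [RL]
  constructor
  · intro hR
    by_contra hne
    push_neg at hne
    have h1T : (1 : ℝ) ∈ {t | ∃ f, GPlus m 𝕊 f ∧ t = RL m 𝕊 p f} := by
      refine ⟨fun S y => if p S y = 0 then (𝕊.card : ℝ) else -1, ⟨?_, ?_⟩, ?_⟩
      · intro S _ y
        show -1 ≤ if p S y = 0 then (𝕊.card : ℝ) else -1
        split <;> linarith
      · intro x
        obtain ⟨S0, hS0, hple⟩ := hne x
        have hp0 : p S0 (proj m S0 x) = 0 :=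
          le_antisymm hple ((hp S0 hS0).1 _)
        have hsplit : (if p S0 (proj m S0 x) = 0 then (𝕊.card : ℝ) else -1) +
            ∑ S ∈ 𝕊.erase S0, (if p S (proj m S x) = 0 then (𝕊.card : ℝ) else -1) =
            ∑ S ∈ 𝕊, (if p S (proj m S x) = 0 then (𝕊.card : ℝ) else -1) :=
          Finset.add_sum_erase 𝕊
            (fun S => if p S (proj m S x) = 0 then (𝕊.card : ℝ) else -1) hS0
        have herase : ∑ S ∈ 𝕊.erase S0, (-1 : ℝ) ≤
            ∑ S ∈ 𝕊.erase S0,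
              (if p S (proj m S x) = 0 then (𝕊.card : ℝ) else -1) :=
          Finset.sum_le_sum fun S _ => by split <;> linarith
        have hcard : ((𝕊.erase S0).card : ℝ) = (𝕊.card : ℝ) - 1 := by
          rw [Finset.card_erase_of_mem hS0,
            Nat.cast_sub (Nat.one_le_iff_ne_zero.2 (Finset.card_pos.2 h𝕊).ne')]
          simp
        rw [if_pos hp0] at hsplit
        rw [Finset.sum_const, nsmul_eq_mul, mul_neg_one, hcard] at herase
        linarith
      · have hinner : ∀ S ∈ 𝕊,
            ∑ y, (if p S y = 0 then (𝕊.card : ℝ) else -1) * p S y = -1 := by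
          intro S hS
          have hpt : ∀ y, (if p S y = 0 then (𝕊.card : ℝ) else -1) * p S y
              = -(p S y) := by
            intro y
            by_cases h : p S y = 0
            · rw [if_pos h, h]; ring
            · rw [if_neg h]; ring
          rw [Finset.sum_congr rfl fun y _ => hpt y, Finset.sum_neg_distrib,
            (hp S hS).2]
        show (1 : ℝ) = -(1 / (𝕊.card : ℝ)) *
          ∑ S ∈ 𝕊, ∑ y, (if p S y = 0 then (𝕊.card : ℝ) else -1) * p S y
        rw [Finset.sum_congr rfl hinner, Finset.sum_const, nsmul_eq_mul]
        field_simp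
    have : (1 : ℝ) ≤ Rix m 𝕊 p := by
      rw [Rix]
      refine le_csSup ⟨1, ?_⟩ h1T
      rintro t ⟨f, ⟨hf1, hf2⟩, rfl⟩
      have hS : ∀ S ∈ 𝕊, -1 ≤ ∑ y, f S y * p S y := fun S hS =>
        pmf_bound (hp S hS) (hf1 S hS)
      have hsum : ∑ S ∈ 𝕊, (-1 : ℝ) ≤ ∑ S ∈ 𝕊, ∑ y, f S y * p S y :=
        Finset.sum_le_sum hS
      rw [Finset.sum_const, nsmul_eq_mul, mul_neg_one] at hsum
      have hmul := mul_le_mul_of_nonneg_left hsum (le_of_lt (one_div_pos.2 hn0))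
      have heq : (1 / (𝕊.card : ℝ)) * (-(𝕊.card : ℝ)) = -1 := by field_simp
      rw [heq] at hmul
      rw [RL]
      nlinarith [hmul]
    linarith
  · rintro ⟨x, hx⟩
    have hne : (𝕊.image fun S => p S (proj m S x)).Nonempty := h𝕊.image _
    set ε := (𝕊.image fun S => p S (proj m S x)).min' hne with hεdef
    obtain ⟨S1, hS1, hval⟩ := Finset.mem_image.1 (Finset.min'_mem _ hne)
    have hε0 : 0 < ε := by
      rw [hεdef, ← hval]
      exact hx S1 hS1
    have hεle : ∀ S ∈ 𝕊, ε ≤ p S (proj m S x) := fun S hS =>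
      Finset.min'_le _ _ (Finset.mem_image_of_mem _ hS)
    have hRle : Rix m 𝕊 p ≤ 1 - ε := by
      rw [Rix]
      apply csSup_le hTne
      rintro t ⟨f, ⟨hf1, hf2⟩, rfl⟩
      have hS : ∀ S ∈ 𝕊, ε * f S (proj m S x) - (1 - ε) ≤ ∑ y, f S y * p S y :=
        fun S hS => pmf_bound' (hp S hS) (hf1 S hS) _ (hεle S hS)
      have h := Finset.sum_le_sum hS
      rw [Finset.sum_sub_distrib, ← Finset.mul_sum, Finset.sum_const,
        nsmul_eq_mul] at h
      have h0 : 0 ≤ ε * ∑ S ∈ 𝕊, f S (proj m S x) :=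
        mul_nonneg hε0.le (hf2 x)
      have hSig : -(𝕊.card : ℝ) * (1 - ε) ≤ ∑ S ∈ 𝕊, ∑ y, f S y * p S y := by
        linarith
      have hmul := mul_le_mul_of_nonneg_left hSig (le_of_lt (one_div_pos.2 hn0))
      have heq : (1 / (𝕊.card : ℝ)) * (-(𝕊.card : ℝ) * (1 - ε)) = -(1 - ε) := by
        field_simp
      rw [heq] at hmul
      rw [RL]
      nlinarith [hmul]
    linarith
end

section
/- For all alphabet sizes m_1,…,m_d ∈ ℕ, every nonempty finite collection 𝕊 of nonempty subsets of [d], and all sample sizes n_𝕊 ∈ ℕ^𝕊, the minimax testing radius satisfies ρ*(n_𝕊) ≤ ∑_{S∈𝕊} ((|X_S|−1)/n_S)^{1/2} + 2 (log 2 · ∑_{S∈𝕊} 1/n_S)^{1/2}. -/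
/-!
The test rejects when the empirical family `P̂_𝕊` has incompatibility index above `A / 2 + t`,
where `A = ∑_S √((|𝒳_S| - 1) / n_S)` and `t = √(log 2 · ∑_S 1 / n_S)`.

Capping `f ∈ 𝒢_𝕊^+` at `|𝕊| - 1` keeps it in `𝒢_𝕊^+` and can only increase `R(P, f)`. A capped
`f_S` ranges over an interval of length `|𝕊|`, so `R(·, f)` is `1`-Lipschitz for
`D(P, Q) = ∑_S d_TV(P_S, Q_S)`, while `R(Q, f) ≤ 0` for compatible `Q`. Hence `R(P) ≤ D(P, Q)`
for compatible `Q` and `R(P) ≤ R(Q) + D(P, Q)` in general, so both error probabilities of the test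
are at most `ℙ(D(P̂_𝕊, P_𝕊) ≥ A / 2 + t)`, the type II one as soon as `R(P_𝕊) ≥ A + 2t`.
By Cauchy–Schwarz and the multinomial variances, `𝔼 D(P̂_𝕊, P_𝕊) ≤ A / 2`; changing one
observation of the `S`-sample moves `D` by at most `1 / n_S`, so McDiarmid's inequality bounds the
deviation probability by `exp(-2t² / ∑_S 1 / n_S) = 1 / 4`.
-/

open Finset

/-- Sample space: independent samples `X_{S,i}`, `i ∈ [n_S]`, for each `S ∈ 𝕊`. -/
abbrev Samples {d : ℕ} (m : Fin d → ℕ) (𝕊 : Finset (Finset (Fin d)))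
    (n : Finset (Fin d) → ℕ) : Type :=
  ∀ S : {T : Finset (Fin d) // T ∈ 𝕊}, Fin (n S.1) → Cell m S.1

/-- Joint mass of a sample under independence, `X_{S,i} ∼ P_S`. -/
noncomputable def jointMass {d : ℕ} (m : Fin d → ℕ) (𝕊 : Finset (Finset (Fin d)))
    (n : Finset (Fin d) → ℕ) (p : ∀ S : Finset (Fin d), Cell m S → ℝ)
    (ω : Samples m 𝕊 n) : ℝ :=
  ∏ S : {T : Finset (Fin d) // T ∈ 𝕊}, ∏ i, p S.1 (ω S i)

/-- Probability of an event under the joint law of the data. -/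
noncomputable def Prob {d : ℕ} (m : Fin d → ℕ) (𝕊 : Finset (Finset (Fin d)))
    (n : Finset (Fin d) → ℕ) (p : ∀ S : Finset (Fin d), Cell m S → ℝ)
    (E : Set (Samples m 𝕊 n)) : ℝ :=
  ∑ ω : Samples m 𝕊 n, E.indicator (jointMass m 𝕊 n p) ω

/-- The empirical family `P̂_𝕊` built from the data (arbitrarily extended off `𝕊`). -/
noncomputable def emp {d : ℕ} (m : Fin d → ℕ) (𝕊 : Finset (Finset (Fin d)))
    (n : Finset (Fin d) → ℕ) (p : ∀ S : Finset (Fin d), Cell m S → ℝ)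
    (ω : Samples m 𝕊 n) : ∀ S : Finset (Fin d), Cell m S → ℝ :=
  fun S y =>
    if h : S ∈ 𝕊 then
      (n S : ℝ)⁻¹ * ((Finset.univ.filter fun i => ω ⟨S, h⟩ i = y).card : ℝ)
    else p S y

/-- Expectation of a test statistic under the joint law of the data. -/
noncomputable def expTest {d : ℕ} (m : Fin d → ℕ) (𝕊 : Finset (Finset (Fin d)))
    (n : Finset (Fin d) → ℕ) (p : ∀ S : Finset (Fin d), Cell m S → ℝ)
    (ψ : Samples m 𝕊 n → ℝ) : ℝ :=
  ∑ ω : Samples m 𝕊 n, ψ ω * jointMass m 𝕊 n p ω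

/-- The minimax risk `ℛ(n_𝕊, ρ)`. -/
noncomputable def minimaxRisk {d : ℕ} (m : Fin d → ℕ) (𝕊 : Finset (Finset (Fin d)))
    (n : Finset (Fin d) → ℕ) (ρ : ℝ) : ℝ :=
  sInf {t : ℝ | ∃ ψ : Samples m 𝕊 n → ℝ, (∀ ω, ψ ω ∈ Set.Icc (0 : ℝ) 1) ∧
    t = sSup {x | ∃ p, IsFamily m 𝕊 p ∧ Compatible m 𝕊 p ∧ x = expTest m 𝕊 n p ψ} +
        sSup {x | ∃ p, IsFamily m 𝕊 p ∧ ρ ≤ Rix m 𝕊 p ∧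
          x = expTest m 𝕊 n p (fun ω => 1 - ψ ω)}}

/-- The minimax testing radius `ρ*(n_𝕊)`. -/
noncomputable def rhoStar {d : ℕ} (m : Fin d → ℕ) (𝕊 : Finset (Finset (Fin d)))
    (n : Finset (Fin d) → ℕ) : ℝ :=
  sInf {ρ : ℝ | 0 ≤ ρ ∧ minimaxRisk m 𝕊 n ρ ≤ 1 / 2}

open Real

lemma nonempty_of_sum_eq_one {β : Type*} [Fintype β] {v : β → ℝ} (hv : ∑ a, v a = 1) :
    Nonempty β :=
  univ_nonempty_iff.mp (nonempty_of_sum_ne_zero (hv ▸ one_ne_zero))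

open MeasureTheory ProbabilityTheory in
/-- Hoeffding's lemma for a law on a finite type. -/
lemma sum_mul_exp_le_of_mem_Icc {β : Type*} [Fintype β] {v : β → ℝ} (hv0 : ∀ a, 0 ≤ v a)
    (hv1 : ∑ a, v a = 1) {Z : β → ℝ} (hZ : ∑ a, v a * Z a = 0) {lo hi : ℝ}
    (hb : ∀ a, Z a ∈ Set.Icc lo hi) (t : ℝ) :
    ∑ a, v a * exp (t * Z a) ≤ exp ((hi - lo) ^ 2 * t ^ 2 / 8) := by
  let _ : MeasurableSpace β := ⊤
  let P : PMF β := PMF.ofFintype (fun a => ENNReal.ofReal (v a)) <| by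
    rw [← ENNReal.ofReal_sum_of_nonneg fun a _ => hv0 a, hv1, ENNReal.ofReal_one]
  have hP (g : β → ℝ) : ∫ a, g a ∂P.toMeasure = ∑ a, v a * g a := by
    simp [P, PMF.integral_eq_sum, ENNReal.toReal_ofReal (hv0 _)]
  have h := (hasSubgaussianMGF_of_mem_Icc_of_integral_eq_zero (μ := P.toMeasure)
    (Measurable.of_discrete).aemeasurable (ae_of_all _ hb) (by rw [hP]; exact hZ)).mgf_le t
  rw [mgf, hP] at h
  convert h using 2
  push_cast
  rw [Real.norm_eq_abs, div_pow, sq_abs]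
  ring

namespace Equiv

variable {ι : Type*} [DecidableEq ι] {α : ι → Type*} (j : ι) (a : α j) (r : ∀ i : {i // i ≠ j}, α i)

lemma piSplitAt_symm_apply_self : (piSplitAt j α).symm (a, r) j = a :=
  congrArg Prod.fst ((piSplitAt j α).apply_symm_apply (a, r))

lemma piSplitAt_symm_apply_of_ne (i : {i // i ≠ j}) : (piSplitAt j α).symm (a, r) i = r i :=
  congrFun (congrArg Prod.snd ((piSplitAt j α).apply_symm_apply (a, r))) i

lemma update_piSplitAt_symm (b : α j) :
    Function.update ((piSplitAt j α).symm (b, r)) j a = (piSplitAt j α).symm (a, r) := by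
  apply (piSplitAt j α).injective
  ext i
  · simp
  · simp only [piSplitAt_apply, Function.update_of_ne i.2, piSplitAt_symm_apply_of_ne]

end Equiv

section ProdExpect

variable {ι : Type*} [Fintype ι] [DecidableEq ι] {α : ι → Type*} [∀ i, Fintype (α i)]

noncomputable def prodExpect (w : ∀ i, α i → ℝ) (f : (∀ i, α i) → ℝ) : ℝ :=
  ∑ x, f x * ∏ i, w i (x i)

variable {w : ∀ i, α i → ℝ}

lemma sum_prod_eq_one_of_sum_eq_one (hw1 : ∀ i, ∑ a, w i a = 1) :
    ∑ x : ∀ i, α i, ∏ i, w i (x i) = 1 := by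
  rw [← Fintype.piFinset_univ, ← prod_univ_sum]
  simp [hw1]

lemma prodExpect_const (hw1 : ∀ i, ∑ a, w i a = 1) (c : ℝ) : prodExpect w (fun _ => c) = c := by
  rw [prodExpect, ← mul_sum, sum_prod_eq_one_of_sum_eq_one hw1, mul_one]

lemma prodExpect_mono (hw0 : ∀ i a, 0 ≤ w i a) {f g : (∀ i, α i) → ℝ} (h : ∀ x, f x ≤ g x) :
    prodExpect w f ≤ prodExpect w g :=
  sum_le_sum fun x _ => mul_le_mul_of_nonneg_right (h x) (prod_nonneg fun i _ => hw0 i _)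

lemma prodExpect_nonneg (hw0 : ∀ i a, 0 ≤ w i a) {f : (∀ i, α i) → ℝ} (h : ∀ x, 0 ≤ f x) :
    0 ≤ prodExpect w f :=
  sum_nonneg fun x _ => mul_nonneg (h x) (prod_nonneg fun i _ => hw0 i _)

lemma prodExpect_sum {κ : Type*} (s : Finset κ) (f : κ → (∀ i, α i) → ℝ) :
    prodExpect w (fun x => ∑ k ∈ s, f k x) = ∑ k ∈ s, prodExpect w (f k) := by
  simp_rw [prodExpect, sum_mul]
  exact sum_comm

lemma prodExpect_const_mul (c : ℝ) (f : (∀ i, α i) → ℝ) :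
    prodExpect w (fun x => c * f x) = c * prodExpect w f := by
  simp_rw [prodExpect, mul_sum, mul_assoc]

lemma prodExpect_eq_sum_piSplitAt (j : ι) (f : (∀ i, α i) → ℝ) :
    prodExpect w f = ∑ r : ∀ i : {i // i ≠ j}, α i,
      (∏ i : {i // i ≠ j}, w i (r i)) * ∑ a, w j a * f ((Equiv.piSplitAt j α).symm (a, r)) := by
  rw [prodExpect, ← (Equiv.piSplitAt j α).symm.sum_comp, Fintype.sum_prod_type, sum_comm]
  refine sum_congr rfl fun r _ => ?_
  rw [mul_sum]
  refine sum_congr rfl fun a _ => ?_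
  simp only [Fintype.prod_eq_mul_prod_subtype_ne _ j, Equiv.piSplitAt_symm_apply_self,
    Equiv.piSplitAt_symm_apply_of_ne]
  ring

lemma prodExpect_eq_prodExpect_update (hw1 : ∀ i, ∑ a, w i a = 1) (j : ι) (f : (∀ i, α i) → ℝ) :
    prodExpect w f = prodExpect w (fun x => ∑ a, w j a * f (Function.update x j a)) := by
  rw [prodExpect_eq_sum_piSplitAt j, prodExpect_eq_sum_piSplitAt j]
  simp only [Equiv.update_piSplitAt_symm, ← sum_mul, hw1, one_mul]

lemma prodExpect_comp_eval (hw1 : ∀ i, ∑ a, w i a = 1) (j : ι) (F : α j → ℝ) :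
    prodExpect w (fun x => F (x j)) = ∑ a, w j a * F a := by
  rw [prodExpect_eq_prodExpect_update hw1 j]
  simp only [Function.update_self]
  exact prodExpect_const hw1 _

lemma prodExpect_comp_eval_mul_comp_eval (hw1 : ∀ i, ∑ a, w i a = 1) {j k : ι} (hjk : j ≠ k)
    (F : α j → ℝ) (G : α k → ℝ) :
    prodExpect w (fun x => F (x j) * G (x k)) = (∑ a, w j a * F a) * ∑ b, w k b * G b := by
  rw [prodExpect_eq_prodExpect_update hw1 j]
  simp only [Function.update_self, Function.update_of_ne hjk.symm, ← mul_assoc, ← sum_mul]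
  rw [prodExpect_const_mul, prodExpect_comp_eval hw1]

/-- Centred functions of distinct coordinates are uncorrelated. -/
lemma prodExpect_sum_sq {κ : Type*} [Fintype κ] (hw1 : ∀ i, ∑ a, w i a = 1) {z : κ → ι}
    (hz : Function.Injective z) (F : ∀ k, α (z k) → ℝ) (hF : ∀ k, ∑ a, w (z k) a * F k a = 0) :
    prodExpect w (fun x => (∑ k, F k (x (z k))) ^ 2) = ∑ k, ∑ a, w (z k) a * F k a ^ 2 := by
  classical
  simp_rw [sq, sum_mul_sum, prodExpect_sum]
  refine sum_congr rfl fun k _ => ?_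
  rw [sum_eq_single k]
  · exact prodExpect_comp_eval hw1 (z k) fun a => F k a * F k a
  · intro l _ hlk
    rw [prodExpect_comp_eval_mul_comp_eval hw1 (hz.ne hlk.symm), hF, zero_mul]
  · simp

lemma prodExpect_abs_le_sqrt (hw0 : ∀ i a, 0 ≤ w i a) (hw1 : ∀ i, ∑ a, w i a = 1)
    (g : (∀ i, α i) → ℝ) :
    prodExpect w (fun x => |g x|) ≤ √(prodExpect w (fun x => g x ^ 2)) := by
  have hP : ∀ x : ∀ i, α i, 0 ≤ ∏ i, w i (x i) := fun x => prod_nonneg fun i _ => hw0 i _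
  apply le_sqrt_of_sq_le
  calc (∑ x, |g x| * ∏ i, w i (x i)) ^ 2
      ≤ (∑ x : ∀ i, α i, ∏ i, w i (x i)) * ∑ x, g x ^ 2 * ∏ i, w i (x i) :=
        sum_sq_le_sum_mul_sum_of_sq_le_mul _ (fun x _ => hP x)
          (fun x _ => mul_nonneg (sq_nonneg _) (hP x)) fun x _ => by
            rw [mul_pow, sq_abs]; exact le_of_eq (by ring)
    _ = prodExpect w (fun x => g x ^ 2) := by rw [sum_prod_eq_one_of_sum_eq_one hw1, one_mul]; rfl

end ProdExpect

section McDiarmid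

open Function

variable {ι : Type*} [DecidableEq ι] {α : ι → Type*} [∀ i, Fintype (α i)] {w : ∀ i, α i → ℝ}

lemma sum_mul_update_sub_le (hw0 : ∀ i a, 0 ≤ w i a) (hw1 : ∀ i, ∑ a, w i a = 1)
    {f : (∀ i, α i) → ℝ} {i j : ι} (hij : i ≠ j) {c : ℝ}
    (hbd : ∀ x a, f (update x i a) - f x ≤ c) (x : ∀ i, α i) (a : α i) :
    ∑ b, w j b * f (update (update x i a) j b) - ∑ b, w j b * f (update x j b) ≤ c :=
  calc ∑ b, w j b * f (update (update x i a) j b) - ∑ b, w j b * f (update x j b)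
      = ∑ b, w j b * (f (update (update x j b) i a) - f (update x j b)) := by
        simp only [← sum_sub_distrib, mul_sub, update_comm hij]
    _ ≤ ∑ b, w j b * c := sum_le_sum fun b _ => mul_le_mul_of_nonneg_left (hbd _ a) (hw0 j b)
    _ = c := by rw [← sum_mul, hw1, one_mul]

/-- Hoeffding's lemma for the `j`-th coordinate, the others being frozen. -/
lemma sum_mul_exp_update_le (hw0 : ∀ i a, 0 ≤ w i a) (hw1 : ∀ i, ∑ a, w i a = 1)
    {f : (∀ i, α i) → ℝ} {j : ι} {c : ℝ} (hbd : ∀ x a, f (update x j a) - f x ≤ c) (t : ℝ)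
    (x : ∀ i, α i) :
    ∑ a, w j a * exp (t * (f (update x j a) - ∑ b, w j b * f (update x j b))) ≤
      exp (t ^ 2 * c ^ 2 / 8) := by
  have : Nonempty (α j) := nonempty_of_sum_eq_one (hw1 j)
  set g := ∑ b, w j b * f (update x j b)
  obtain ⟨a₀, -, ha₀⟩ := exists_min_image univ (fun a => f (update x j a)) univ_nonempty
  have hZ : ∑ a, w j a * (f (update x j a) - g) = 0 := by
    simp only [mul_sub, sum_sub_distrib, ← sum_mul, hw1, one_mul, g, sub_self]
  have hb : ∀ a, f (update x j a) - g ∈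
      Set.Icc (f (update x j a₀) - g) (f (update x j a₀) + c - g) := by
    intro a
    have := hbd (update x j a₀) a
    rw [update_idem] at this
    constructor <;> linarith [ha₀ a (mem_univ a)]
  refine (sum_mul_exp_le_of_mem_Icc (hw0 j) (hw1 j) hZ hb t).trans_eq ?_
  congr 1
  ring

/-- Induction on the set of coordinates `f` depends on, averaging out one coordinate at a time. -/
lemma prodExpect_exp_le_of_bounded_differences [Fintype ι] (hw0 : ∀ i a, 0 ≤ w i a)
    (hw1 : ∀ i, ∑ a, w i a = 1) (s : Finset ι) (f : (∀ i, α i) → ℝ) (c : ι → ℝ) (t : ℝ)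
    (hdep : ∀ x y : ∀ i, α i, (∀ i ∈ s, x i = y i) → f x = f y)
    (hbd : ∀ i ∈ s, ∀ x a, f (update x i a) - f x ≤ c i) :
    prodExpect w (fun x => exp (t * (f x - prodExpect w f))) ≤
      exp (t ^ 2 * (∑ i ∈ s, c i ^ 2) / 8) := by
  induction s using Finset.induction generalizing f with
  | empty =>
    obtain ⟨x₀⟩ := nonempty_of_sum_eq_one (sum_prod_eq_one_of_sum_eq_one hw1)
    have hconst : f = fun _ => f x₀ := funext fun x => hdep x x₀ (by simp)
    rw [hconst]
    simp [prodExpect_const hw1]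
  | @insert j s hj ih =>
    set g : (∀ i, α i) → ℝ := fun x => ∑ a, w j a * f (update x j a)
    have hEg : prodExpect w g = prodExpect w f := (prodExpect_eq_prodExpect_update hw1 j f).symm
    have hgdep : ∀ x y, (∀ i ∈ s, x i = y i) → g x = g y := by
      refine fun x y hxy => sum_congr rfl fun a _ => congrArg _ (hdep _ _ fun i hi => ?_)
      rcases eq_or_ne i j with rfl | hij
      · simp
      · simp [update_of_ne hij, hxy i ((mem_insert.1 hi).resolve_left hij)]
    have hgbd : ∀ i ∈ s, ∀ x a, g (update x i a) - g x ≤ c i := fun i hi =>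
      sum_mul_update_sub_le hw0 hw1 (ne_of_mem_of_not_mem hi hj) (hbd i (mem_insert_of_mem hi))
    have hsplit : ∀ x, ∑ a, w j a * exp (t * (f (update x j a) - prodExpect w f)) =
        (∑ a, w j a * exp (t * (f (update x j a) - g x))) * exp (t * (g x - prodExpect w g)) := by
      intro x
      rw [hEg, sum_mul]
      refine sum_congr rfl fun a _ => ?_
      rw [mul_assoc, ← exp_add]
      ring_nf
    calc prodExpect w (fun x => exp (t * (f x - prodExpect w f)))
        = prodExpect w (fun x => ∑ a, w j a * exp (t * (f (update x j a) - prodExpect w f))) :=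
          prodExpect_eq_prodExpect_update hw1 j _
      _ ≤ exp (t ^ 2 * c j ^ 2 / 8) * prodExpect w (fun x => exp (t * (g x - prodExpect w g))) := by
          rw [← prodExpect_const_mul]
          refine prodExpect_mono hw0 fun x => (hsplit x).trans_le ?_
          exact mul_le_mul_of_nonneg_right
            (sum_mul_exp_update_le hw0 hw1 (hbd j (mem_insert_self j s)) t x) (exp_nonneg _)
      _ ≤ exp (t ^ 2 * c j ^ 2 / 8) * exp (t ^ 2 * (∑ i ∈ s, c i ^ 2) / 8) :=
          mul_le_mul_of_nonneg_left (ih g hgdep hgbd) (exp_nonneg _)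
      _ = exp (t ^ 2 * (∑ i ∈ insert j s, c i ^ 2) / 8) := by
          rw [← exp_add, sum_insert hj]; ring_nf

/-- McDiarmid's inequality. -/
lemma prodExpect_indicator_le_of_bounded_differences [Fintype ι] (hw0 : ∀ i a, 0 ≤ w i a)
    (hw1 : ∀ i, ∑ a, w i a = 1) (f : (∀ i, α i) → ℝ) (c : ι → ℝ)
    (hbd : ∀ i x a, f (update x i a) - f x ≤ c i) {ε : ℝ} (hε : 0 ≤ ε)
    (hc : 0 < ∑ i, c i ^ 2) :
    prodExpect w (fun x => if prodExpect w f + ε ≤ f x then 1 else 0) ≤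
      exp (-(2 * ε ^ 2 / ∑ i, c i ^ 2)) := by
  set C := ∑ i, c i ^ 2
  set t := 4 * ε / C
  have hmgf := prodExpect_exp_le_of_bounded_differences hw0 hw1 univ f c t
    (fun x y h => congrArg f (funext fun i => h i (mem_univ i))) (fun i _ => hbd i)
  have hpt : ∀ x, (if prodExpect w f + ε ≤ f x then (1 : ℝ) else 0) ≤
      exp (-(t * ε)) * exp (t * (f x - prodExpect w f)) := by
    intro x
    rw [← exp_add]
    split_ifs with h
    · exact one_le_exp (by nlinarith [show 0 ≤ t by positivity])
    · exact (exp_pos _).le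
  calc prodExpect w (fun x => if prodExpect w f + ε ≤ f x then 1 else 0)
      ≤ exp (-(t * ε)) * prodExpect w (fun x => exp (t * (f x - prodExpect w f))) := by
        rw [← prodExpect_const_mul]; exact prodExpect_mono hw0 hpt
    _ ≤ exp (-(t * ε)) * exp (t ^ 2 * C / 8) := mul_le_mul_of_nonneg_left hmgf (exp_nonneg _)
    _ = exp (-(2 * ε ^ 2 / C)) := by
        rw [← exp_add]; congr 1; simp only [t]; field_simp; ring

end McDiarmid

lemma sum_mul_indicator_sub_eq_zero {κ : Type*} [Fintype κ] [DecidableEq κ] {q : κ → ℝ}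
    (hq : ∑ a, q a = 1) (y : κ) : ∑ a, q a * ((if a = y then 1 else 0) - q y) = 0 := by
  simp [mul_sub, sum_sub_distrib, ← sum_mul, hq]

lemma sum_mul_indicator_sub_sq {κ : Type*} [Fintype κ] [DecidableEq κ] {q : κ → ℝ}
    (hq : ∑ a, q a = 1) (y : κ) :
    ∑ a, q a * ((if a = y then 1 else 0) - q y) ^ 2 = q y * (1 - q y) := by
  have h : ∀ a, q a * ((if a = y then 1 else 0) - q y) ^ 2 =
      (if a = y then q a else 0) * (1 - 2 * q y) + q a * q y ^ 2 := fun a => by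
    split_ifs <;> ring
  simp only [h, sum_add_distrib, ← sum_mul, sum_ite_eq', mem_univ, if_true, hq]
  ring

lemma sum_sqrt_mul_one_sub_le {κ : Type*} [Fintype κ] {q : κ → ℝ} (hq0 : ∀ a, 0 ≤ q a)
    (hq1 : ∑ a, q a = 1) : ∑ a, √(q a * (1 - q a)) ≤ √(Fintype.card κ - 1) := by
  have hle : ∀ a, q a ≤ 1 := fun a => hq1 ▸ single_le_sum (fun b _ => hq0 b) (mem_univ a)
  have hvar : ∀ a, 0 ≤ q a * (1 - q a) := fun a => mul_nonneg (hq0 a) (by linarith [hle a])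
  have hcs : (∑ a, √(q a * (1 - q a))) ^ 2 ≤ Fintype.card κ * ∑ a, q a * (1 - q a) := by
    simpa only [sq_sqrt (hvar _), card_univ] using sq_sum_le_card_mul_sum_sq (s := univ)
      (f := fun a => √(q a * (1 - q a)))
  have hsq : (∑ a, q a) ^ 2 ≤ Fintype.card κ * ∑ a, q a ^ 2 := sq_sum_le_card_mul_sum_sq
  have hsum : ∑ a, q a * (1 - q a) = 1 - ∑ a, q a ^ 2 := by
    simp only [mul_sub, mul_one, sum_sub_distrib, hq1, sq]
  rw [hq1] at hsq
  rw [hsum] at hcs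
  exact le_sqrt_of_sq_le (by nlinarith)

lemma sum_abs_indicator_sub_indicator_le {κ : Type*} [Fintype κ] [DecidableEq κ] (a b : κ) :
    ∑ y, |(if a = y then 1 else 0) - if b = y then (1 : ℝ) else 0| ≤ 2 := by
  calc ∑ y, |(if a = y then 1 else 0) - if b = y then (1 : ℝ) else 0|
      ≤ ∑ y, ((if a = y then 1 else 0) + if b = y then (1 : ℝ) else 0) :=
        sum_le_sum fun y _ => (abs_sub _ _).trans_eq (by split_ifs <;> norm_num)
    _ = 2 := by simp only [sum_add_distrib, sum_ite_eq, mem_univ, if_true]; norm_num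

section Incompatibility

variable {d : ℕ} {m : Fin d → ℕ} {𝕊 : Finset (Finset (Fin d))}

noncomputable def tvSum (m : Fin d → ℕ) (𝕊 : Finset (Finset (Fin d)))
    (p q : ∀ S : Finset (Fin d), Cell m S → ℝ) : ℝ :=
  ∑ S ∈ 𝕊, (1 / 2) * ∑ y, |p S y - q S y|

lemma tvSum_nonneg (p q : ∀ S : Finset (Fin d), Cell m S → ℝ) : 0 ≤ tvSum m 𝕊 p q :=
  sum_nonneg fun _ _ => mul_nonneg (by norm_num) (sum_nonneg fun _ _ => abs_nonneg _)

lemma tvSum_comm (p q : ∀ S : Finset (Fin d), Cell m S → ℝ) : tvSum m 𝕊 p q = tvSum m 𝕊 q p := by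
  simp only [tvSum, abs_sub_comm]

lemma RL_le_one {p f : ∀ S : Finset (Fin d), Cell m S → ℝ} (h𝕊 : 𝕊.Nonempty)
    (hp : IsFamily m 𝕊 p) (hf : ∀ S ∈ 𝕊, ∀ y, -1 ≤ f S y) : RL m 𝕊 p f ≤ 1 := by
  have hcard : (0 : ℝ) < 𝕊.card := by exact_mod_cast h𝕊.card_pos
  have hS : ∀ S ∈ 𝕊, -1 ≤ ∑ y, f S y * p S y := fun S hS =>
    calc -1 = ∑ y, -1 * p S y := by rw [← mul_sum, (hp S hS).2, mul_one]
      _ ≤ ∑ y, f S y * p S y :=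
        sum_le_sum fun y _ => mul_le_mul_of_nonneg_right (hf S hS y) ((hp S hS).1 y)
  have hsum := card_nsmul_le_sum 𝕊 _ _ hS
  rw [nsmul_eq_mul] at hsum
  rw [RL, neg_mul, neg_le, one_div, ← div_eq_inv_mul, le_div_iff₀ hcard]
  linarith

lemma bddAbove_RL {p : ∀ S : Finset (Fin d), Cell m S → ℝ} (h𝕊 : 𝕊.Nonempty)
    (hp : IsFamily m 𝕊 p) : BddAbove {t | ∃ f, GPlus m 𝕊 f ∧ t = RL m 𝕊 p f} :=
  ⟨1, fun _ ⟨_, hf, ht⟩ => ht ▸ RL_le_one h𝕊 hp hf.1⟩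

lemma Rix_nonneg {p : ∀ S : Finset (Fin d), Cell m S → ℝ} (h𝕊 : 𝕊.Nonempty)
    (hp : IsFamily m 𝕊 p) : 0 ≤ Rix m 𝕊 p :=
  le_csSup (bddAbove_RL h𝕊 hp) ⟨0, ⟨fun _ _ _ => by norm_num, fun _ => by simp⟩, by simp [RL]⟩

noncomputable def truncate (𝕊 : Finset (Finset (Fin d))) (f : ∀ S : Finset (Fin d), Cell m S → ℝ) :
    ∀ S : Finset (Fin d), Cell m S → ℝ :=
  fun S y => min (f S y) (𝕊.card - 1)

/-- If one term is capped, the other `|𝕊| - 1` terms are each at least `-1`. -/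
lemma gPlus_truncate {f : ∀ S : Finset (Fin d), Cell m S → ℝ} (h𝕊 : 𝕊.Nonempty)
    (hf : GPlus m 𝕊 f) : GPlus m 𝕊 (truncate 𝕊 f) := by
  have hcard : (1 : ℝ) ≤ 𝕊.card := by exact_mod_cast h𝕊.card_pos
  refine ⟨fun S hS y => le_min (hf.1 S hS y) (by linarith), fun x => ?_⟩
  by_cases hall : ∀ S ∈ 𝕊, f S (proj m S x) ≤ 𝕊.card - 1
  · convert hf.2 x using 2 with S hS
    exact min_eq_left (hall S hS)
  · push Not at hall
    obtain ⟨S₀, hS₀, hgt⟩ := hall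
    have hrest := card_nsmul_le_sum (𝕊.erase S₀) (fun S => truncate 𝕊 f S (proj m S x)) (-1)
      fun S hS => le_min (hf.1 S (mem_of_mem_erase hS) _) (by linarith)
    rw [← add_sum_erase _ _ hS₀, truncate, min_eq_right hgt.le]
    rw [card_erase_of_mem hS₀, nsmul_eq_mul, Nat.cast_pred h𝕊.card_pos] at hrest
    linarith

lemma RL_le_RL_truncate {p : ∀ S : Finset (Fin d), Cell m S → ℝ} (hp : IsFamily m 𝕊 p)
    (f : ∀ S : Finset (Fin d), Cell m S → ℝ) : RL m 𝕊 p f ≤ RL m 𝕊 p (truncate 𝕊 f) := by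
  simp only [RL, neg_mul, neg_le_neg_iff]
  gcongr with S hS y
  · exact (hp S hS).1 y
  · exact min_le_left _ _

/-- Centre `f S` at the midpoint of its range, an interval of length `|𝕊|`. -/
lemma RL_le_RL_add_tvSum {p q f : ∀ S : Finset (Fin d), Cell m S → ℝ} (h𝕊 : 𝕊.Nonempty)
    (hp : IsFamily m 𝕊 p) (hq : IsFamily m 𝕊 q) (hf₁ : ∀ S ∈ 𝕊, ∀ y, -1 ≤ f S y)
    (hf₂ : ∀ S ∈ 𝕊, ∀ y, f S y ≤ 𝕊.card - 1) :
    RL m 𝕊 p f ≤ RL m 𝕊 q f + tvSum m 𝕊 p q := by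
  have hcard : (0 : ℝ) < 𝕊.card := by exact_mod_cast h𝕊.card_pos
  set M : ℝ := (𝕊.card : ℝ)
  have hS : ∀ S ∈ 𝕊, ∑ y, f S y * q S y - ∑ y, f S y * p S y ≤
      M * ((1 / 2) * ∑ y, |p S y - q S y|) := by
    intro S hS
    have hcentre : ∑ y, f S y * q S y - ∑ y, f S y * p S y =
        ∑ y, (f S y - (M - 2) / 2) * (q S y - p S y) := by
      simp only [sub_mul, mul_sub, sum_sub_distrib, ← mul_sum, (hp S hS).2, (hq S hS).2]
      ring
    rw [hcentre, ← mul_assoc, mul_sum]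
    refine sum_le_sum fun y _ => ?_
    have hmid : |f S y - (M - 2) / 2| ≤ M / 2 :=
      abs_le.2 ⟨by linarith [hf₁ S hS y], by linarith [hf₂ S hS y]⟩
    calc (f S y - (M - 2) / 2) * (q S y - p S y)
        ≤ |f S y - (M - 2) / 2| * |p S y - q S y| := by
          rw [abs_sub_comm (p S y), ← abs_mul]; exact le_abs_self _
      _ ≤ M * (1 / 2) * |p S y - q S y| := by
          rw [mul_one_div]; exact mul_le_mul_of_nonneg_right hmid (abs_nonneg _)
  have hsum := sum_le_sum hS
  rw [← mul_sum, sum_sub_distrib] at hsum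
  calc RL m 𝕊 p f = RL m 𝕊 q f + 1 / M *
        (∑ S ∈ 𝕊, ∑ y, f S y * q S y - ∑ S ∈ 𝕊, ∑ y, f S y * p S y) := by
        simp only [RL]; ring
    _ ≤ RL m 𝕊 q f + 1 / M * (M * tvSum m 𝕊 p q) := by gcongr; exact hsum
    _ = RL m 𝕊 q f + tvSum m 𝕊 p q := by field_simp

lemma RL_nonpos_of_compatible {q f : ∀ S : Finset (Fin d), Cell m S → ℝ}
    (hq : Compatible m 𝕊 q) (hf : GPlus m 𝕊 f) : RL m 𝕊 q f ≤ 0 := by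
  obtain ⟨r, hr, hmarg⟩ := hq
  have hS : ∀ S ∈ 𝕊, ∑ y, f S y * q S y = ∑ x, f S (proj m S x) * r x := by
    intro S hS
    simp_rw [hmarg S hS, mul_sum, mul_ite, mul_zero]
    rw [sum_comm]
    simp
  rw [RL, sum_congr rfl hS, sum_comm, neg_mul, neg_nonpos]
  exact mul_nonneg (by positivity) (sum_nonneg fun x _ => by
    rw [← sum_mul]; exact mul_nonneg (hf.2 x) (hr.1 x))

lemma Rix_le_tvSum_of_compatible {p q : ∀ S : Finset (Fin d), Cell m S → ℝ} (h𝕊 : 𝕊.Nonempty)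
    (hp : IsFamily m 𝕊 p) (hpc : Compatible m 𝕊 p) (hq : IsFamily m 𝕊 q) :
    Rix m 𝕊 q ≤ tvSum m 𝕊 q p := by
  refine Real.sSup_le ?_ (tvSum_nonneg q p)
  rintro _ ⟨f, hf, rfl⟩
  calc RL m 𝕊 q f ≤ RL m 𝕊 q (truncate 𝕊 f) := RL_le_RL_truncate hq f
    _ ≤ RL m 𝕊 p (truncate 𝕊 f) + tvSum m 𝕊 q p :=
        RL_le_RL_add_tvSum h𝕊 hq hp (gPlus_truncate h𝕊 hf).1 fun _ _ _ => min_le_right _ _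
    _ ≤ tvSum m 𝕊 q p := by linarith [RL_nonpos_of_compatible hpc (gPlus_truncate h𝕊 hf)]

lemma Rix_le_Rix_add_tvSum {p q : ∀ S : Finset (Fin d), Cell m S → ℝ} (h𝕊 : 𝕊.Nonempty)
    (hp : IsFamily m 𝕊 p) (hq : IsFamily m 𝕊 q) :
    Rix m 𝕊 p ≤ Rix m 𝕊 q + tvSum m 𝕊 p q := by
  refine Real.sSup_le ?_ (add_nonneg (Rix_nonneg h𝕊 hq) (tvSum_nonneg p q))
  rintro _ ⟨f, hf, rfl⟩
  calc RL m 𝕊 p f ≤ RL m 𝕊 p (truncate 𝕊 f) := RL_le_RL_truncate hp f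
    _ ≤ RL m 𝕊 q (truncate 𝕊 f) + tvSum m 𝕊 p q :=
        RL_le_RL_add_tvSum h𝕊 hp hq (gPlus_truncate h𝕊 hf).1 fun _ _ _ => min_le_right _ _
    _ ≤ Rix m 𝕊 q + tvSum m 𝕊 p q := by
        gcongr
        exact le_csSup (bddAbove_RL h𝕊 hq) ⟨_, gPlus_truncate h𝕊 hf, rfl⟩

end Incompatibility

section Empirical

variable {d : ℕ} {m : Fin d → ℕ} {𝕊 : Finset (Finset (Fin d))} {n : Finset (Fin d) → ℕ}

/-- Indexes the single observations `X_{S,i}`: the law of the data is the product, over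
`SampleIdx`, of the margins `P_S`. -/
abbrev SampleIdx (𝕊 : Finset (Finset (Fin d))) (n : Finset (Fin d) → ℕ) : Type :=
  Σ S : {T : Finset (Fin d) // T ∈ 𝕊}, Fin (n S.1)

def samplesEquiv (m : Fin d → ℕ) (𝕊 : Finset (Finset (Fin d))) (n : Finset (Fin d) → ℕ) :
    (∀ z : SampleIdx 𝕊 n, Cell m z.1.1) ≃ Samples m 𝕊 n :=
  Equiv.piCurry fun (S : {T // T ∈ 𝕊}) (_ : Fin (n S.1)) => Cell m S.1

lemma expTest_eq_prodExpect (p : ∀ S : Finset (Fin d), Cell m S → ℝ) (ψ : Samples m 𝕊 n → ℝ) :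
    expTest m 𝕊 n p ψ =
      prodExpect (fun z : SampleIdx 𝕊 n => p z.1.1) (fun x => ψ (samplesEquiv m 𝕊 n x)) := by
  rw [expTest, prodExpect, ← (samplesEquiv m 𝕊 n).sum_comp]
  refine sum_congr rfl fun x _ => ?_
  rw [jointMass, ← univ_sigma_univ, prod_sigma]
  rfl

lemma expTest_mono {p : ∀ S : Finset (Fin d), Cell m S → ℝ} (hp : IsFamily m 𝕊 p)
    {ψ φ : Samples m 𝕊 n → ℝ} (h : ∀ ω, ψ ω ≤ φ ω) : expTest m 𝕊 n p ψ ≤ expTest m 𝕊 n p φ := by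
  simp only [expTest_eq_prodExpect]
  exact prodExpect_mono (fun z => (hp z.1.1 z.1.2).1) fun x => h _

lemma emp_eq_sum (p : ∀ S : Finset (Fin d), Cell m S → ℝ) (ω : Samples m 𝕊 n) {S : Finset (Fin d)}
    (hS : S ∈ 𝕊) (y : Cell m S) :
    emp m 𝕊 n p ω S y = (n S : ℝ)⁻¹ * ∑ i, if ω ⟨S, hS⟩ i = y then 1 else 0 := by
  rw [emp, dif_pos hS, card_filter]
  push_cast
  rfl

lemma emp_isFamily (hn : ∀ S ∈ 𝕊, 0 < n S) (p : ∀ S : Finset (Fin d), Cell m S → ℝ)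
    (ω : Samples m 𝕊 n) : IsFamily m 𝕊 (emp m 𝕊 n p ω) := by
  intro S hS
  refine ⟨fun y => by rw [emp_eq_sum p ω hS]; positivity, ?_⟩
  have hnS : (n S : ℝ) ≠ 0 := by exact_mod_cast (hn S hS).ne'
  simp_rw [emp_eq_sum p ω hS, ← mul_sum]
  rw [sum_comm]
  simp [hnS]

lemma prodExpect_emp_sub_sq (hn : ∀ S ∈ 𝕊, 0 < n S) {p : ∀ S : Finset (Fin d), Cell m S → ℝ}
    (hp : IsFamily m 𝕊 p) (q : ∀ S : Finset (Fin d), Cell m S → ℝ) {S : Finset (Fin d)}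
    (hS : S ∈ 𝕊) (y : Cell m S) :
    prodExpect (fun z : SampleIdx 𝕊 n => p z.1.1)
        (fun x => (emp m 𝕊 n q (samplesEquiv m 𝕊 n x) S y - p S y) ^ 2) =
      p S y * (1 - p S y) / n S := by
  have hnS : (n S : ℝ) ≠ 0 := by exact_mod_cast (hn S hS).ne'
  let F : Cell m S → ℝ := fun a => (if a = y then 1 else 0) - p S y
  have hcentre : ∀ x, emp m 𝕊 n q (samplesEquiv m 𝕊 n x) S y - p S y =
      (n S : ℝ)⁻¹ * ∑ i, F (x ⟨⟨S, hS⟩, i⟩) := by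
    intro x
    rw [emp_eq_sum q _ hS, sum_sub_distrib, sum_const, card_univ, Fintype.card_fin, nsmul_eq_mul,
      mul_sub, inv_mul_cancel_left₀ hnS]
    rfl
  have hw1 : ∀ z : SampleIdx 𝕊 n, ∑ a, p z.1.1 a = 1 := fun z => (hp z.1.1 z.1.2).2
  have hF : ∀ i : Fin (n S), ∑ a, p S a * F a = 0 :=
    fun _ => sum_mul_indicator_sub_eq_zero (hp S hS).2 y
  have hvar := prodExpect_sum_sq (w := fun z : SampleIdx 𝕊 n => p z.1.1) (z := Sigma.mk ⟨S, hS⟩)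
    hw1 sigma_mk_injective (fun _ => F) hF
  simp only [hcentre, mul_pow]
  rw [prodExpect_const_mul, hvar]
  simp only [F, sum_mul_indicator_sub_sq (hp S hS).2 y, sum_const, card_univ, Fintype.card_fin,
    nsmul_eq_mul]
  field_simp

lemma expTest_tvSum_emp_le (hn : ∀ S ∈ 𝕊, 0 < n S) {p : ∀ S : Finset (Fin d), Cell m S → ℝ}
    (hp : IsFamily m 𝕊 p) (q : ∀ S : Finset (Fin d), Cell m S → ℝ) :
    expTest m 𝕊 n p (fun ω => tvSum m 𝕊 (emp m 𝕊 n q ω) p) ≤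
      (1 / 2) * ∑ S ∈ 𝕊, √((Fintype.card (Cell m S) - 1) / n S) := by
  have hw0 : ∀ (z : SampleIdx 𝕊 n) a, 0 ≤ p z.1.1 a := fun z => (hp z.1.1 z.1.2).1
  have hw1 : ∀ z : SampleIdx 𝕊 n, ∑ a, p z.1.1 a = 1 := fun z => (hp z.1.1 z.1.2).2
  simp only [expTest_eq_prodExpect, tvSum, prodExpect_sum, prodExpect_const_mul]
  rw [mul_sum]
  refine sum_le_sum fun S hS => mul_le_mul_of_nonneg_left ?_ (by norm_num : (0 : ℝ) ≤ 1 / 2)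
  have hnS : (0 : ℝ) ≤ n S := Nat.cast_nonneg _
  calc ∑ y, prodExpect _ (fun x => |emp m 𝕊 n q (samplesEquiv m 𝕊 n x) S y - p S y|)
      ≤ ∑ y, √(p S y * (1 - p S y) / n S) := sum_le_sum fun y _ => by
        rw [← prodExpect_emp_sub_sq hn hp q hS y]
        exact prodExpect_abs_le_sqrt hw0 hw1 _
    _ ≤ √((Fintype.card (Cell m S) - 1) / n S) := by
        simp only [sqrt_div' _ hnS, ← sum_div]
        gcongr
        exact sum_sqrt_mul_one_sub_le (hp S hS).1 (hp S hS).2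

lemma tvSum_sub_tvSum_le (p q r : ∀ S : Finset (Fin d), Cell m S → ℝ) :
    tvSum m 𝕊 p r - tvSum m 𝕊 q r ≤ tvSum m 𝕊 p q := by
  simp only [tvSum, ← sum_sub_distrib, ← mul_sub]
  gcongr with S _ y
  calc |p S y - r S y| - |q S y - r S y| ≤ |(p S y - r S y) - (q S y - r S y)| :=
        abs_sub_abs_le_abs_sub _ _
    _ = |p S y - q S y| := by ring_nf

lemma tvSum_emp_update_le (q : ∀ S : Finset (Fin d), Cell m S → ℝ)
    (x : ∀ z : SampleIdx 𝕊 n, Cell m z.1.1) (z : SampleIdx 𝕊 n) (a : Cell m z.1.1) :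
    tvSum m 𝕊 (emp m 𝕊 n q (samplesEquiv m 𝕊 n (Function.update x z a)))
      (emp m 𝕊 n q (samplesEquiv m 𝕊 n x)) ≤ (n z.1.1 : ℝ)⁻¹ := by
  obtain ⟨⟨S₀, hS₀⟩, i₀⟩ := z
  have hdiff : ∀ S (hS : S ∈ 𝕊) y,
      emp m 𝕊 n q (samplesEquiv m 𝕊 n (Function.update x ⟨⟨S₀, hS₀⟩, i₀⟩ a)) S y
        - emp m 𝕊 n q (samplesEquiv m 𝕊 n x) S y =
      (n S : ℝ)⁻¹ * ∑ i, ((if Function.update x ⟨⟨S₀, hS₀⟩, i₀⟩ a ⟨⟨S, hS⟩, i⟩ = y then 1 else 0)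
        - if x ⟨⟨S, hS⟩, i⟩ = y then 1 else 0) := by
    intro S hS y
    rw [emp_eq_sum q _ hS, emp_eq_sum q _ hS, sum_sub_distrib, mul_sub]
    rfl
  unfold tvSum
  rw [sum_eq_single S₀ ?_ (absurd hS₀)]
  · have hself : ∀ y, (∑ i,
        ((if Function.update x ⟨⟨S₀, hS₀⟩, i₀⟩ a ⟨⟨S₀, hS₀⟩, i⟩ = y then 1 else 0)
          - if x ⟨⟨S₀, hS₀⟩, i⟩ = y then (1 : ℝ) else 0)) =
        (if a = y then 1 else 0) - if x ⟨⟨S₀, hS₀⟩, i₀⟩ = y then 1 else 0 := fun y => by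
      rw [sum_eq_single i₀ (fun i _ hi => by
        rw [Function.update_of_ne (by simpa using hi), sub_self]) (absurd (mem_univ _))]
      rw [Function.update_self]
    simp only [hdiff S₀ hS₀, hself, abs_mul, abs_inv, Nat.abs_cast, ← mul_sum]
    have htwo := sum_abs_indicator_sub_indicator_le a (x ⟨⟨S₀, hS₀⟩, i₀⟩)
    have hinv : (0 : ℝ) ≤ (n S₀ : ℝ)⁻¹ := by positivity
    nlinarith
  · intro S hS hne
    refine mul_eq_zero_of_right _ (sum_eq_zero fun y _ => ?_)
    rw [hdiff S hS]
    rw [sum_eq_zero fun i _ => by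
      rw [Function.update_of_ne fun h => hne (congrArg (fun z => z.1.1) h), sub_self]]
    simp

lemma sum_sampleIdx_inv_sq (hn : ∀ S ∈ 𝕊, 0 < n S) :
    ∑ z : SampleIdx 𝕊 n, ((n z.1.1 : ℝ)⁻¹) ^ 2 = ∑ S ∈ 𝕊, 1 / (n S : ℝ) := by
  rw [← univ_sigma_univ, sum_sigma, ← sum_coe_sort 𝕊]
  refine sum_congr rfl fun S _ => ?_
  have : (n S.1 : ℝ) ≠ 0 := by exact_mod_cast (hn S.1 S.2).ne'
  change ∑ _i : Fin (n S.1), ((n S.1 : ℝ)⁻¹) ^ 2 = _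
  rw [sum_const, card_univ, Fintype.card_fin, nsmul_eq_mul]
  field_simp

/-- The deviation `√(log 2 · ∑ 1/n_S)` is chosen so that McDiarmid's bound equals `1/4`. -/
lemma expTest_tvSum_emp_ge_le (h𝕊 : 𝕊.Nonempty) (hn : ∀ S ∈ 𝕊, 0 < n S)
    {p : ∀ S : Finset (Fin d), Cell m S → ℝ} (hp : IsFamily m 𝕊 p)
    (q : ∀ S : Finset (Fin d), Cell m S → ℝ) {r : ℝ}
    (hr : (1 / 2) * ∑ S ∈ 𝕊, √((Fintype.card (Cell m S) - 1) / n S) +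
      √(log 2 * ∑ S ∈ 𝕊, 1 / (n S : ℝ)) ≤ r) :
    expTest m 𝕊 n p (fun ω => if r ≤ tvSum m 𝕊 (emp m 𝕊 n q ω) p then 1 else 0) ≤ 1 / 4 := by
  have hC : 0 < ∑ S ∈ 𝕊, 1 / (n S : ℝ) :=
    sum_pos (fun S hS => by have := hn S hS; positivity) h𝕊
  have hε : √(log 2 * ∑ S ∈ 𝕊, 1 / (n S : ℝ)) ^ 2 = log 2 * ∑ S ∈ 𝕊, 1 / (n S : ℝ) :=
    sq_sqrt (mul_nonneg (log_nonneg one_le_two) hC.le)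
  have hw0 : ∀ (z : SampleIdx 𝕊 n) a, 0 ≤ p z.1.1 a := fun z => (hp z.1.1 z.1.2).1
  have hw1 : ∀ z : SampleIdx 𝕊 n, ∑ a, p z.1.1 a = 1 := fun z => (hp z.1.1 z.1.2).2
  have hmean := expTest_tvSum_emp_le hn hp q
  have hmcd := prodExpect_indicator_le_of_bounded_differences hw0 hw1
    (fun x => tvSum m 𝕊 (emp m 𝕊 n q (samplesEquiv m 𝕊 n x)) p)
    (fun z : SampleIdx 𝕊 n => (n z.1.1 : ℝ)⁻¹)
    (fun z x a => (tvSum_sub_tvSum_le _ _ _).trans (tvSum_emp_update_le q x z a))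
    (sqrt_nonneg (log 2 * ∑ S ∈ 𝕊, 1 / (n S : ℝ))) (by rwa [sum_sampleIdx_inv_sq hn])
  rw [expTest_eq_prodExpect] at hmean ⊢
  refine (prodExpect_mono hw0 fun x => ?_).trans (hmcd.trans_eq ?_)
  · split_ifs <;> linarith
  · rw [sum_sampleIdx_inv_sq hn, hε, ← mul_assoc, mul_div_cancel_right₀ _ hC.ne',
      ← log_rpow two_pos, ← log_inv, exp_log (by norm_num)]
    norm_num

lemma expTest_nonneg {p : ∀ S : Finset (Fin d), Cell m S → ℝ} (hp : IsFamily m 𝕊 p)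
    {ψ : Samples m 𝕊 n → ℝ} (hψ : ∀ ω, 0 ≤ ψ ω) : 0 ≤ expTest m 𝕊 n p ψ := by
  rw [expTest_eq_prodExpect]
  exact prodExpect_nonneg (fun z => (hp z.1.1 z.1.2).1) fun x => hψ _

end Empirical

section Minimax

variable {d : ℕ} {m : Fin d → ℕ} {𝕊 : Finset (Finset (Fin d))} {n : Finset (Fin d) → ℕ}

lemma minimaxRisk_le {ρ a b : ℝ} (ψ : Samples m 𝕊 n → ℝ) (hψ : ∀ ω, ψ ω ∈ Set.Icc 0 1)
    (ha : 0 ≤ a) (hb : 0 ≤ b)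
    (h₀ : ∀ p, IsFamily m 𝕊 p → Compatible m 𝕊 p → expTest m 𝕊 n p ψ ≤ a)
    (h₁ : ∀ p, IsFamily m 𝕊 p → ρ ≤ Rix m 𝕊 p → expTest m 𝕊 n p (fun ω => 1 - ψ ω) ≤ b) :
    minimaxRisk m 𝕊 n ρ ≤ a + b := by
  unfold minimaxRisk
  refine csInf_le_of_le ⟨0, ?_⟩ ⟨ψ, hψ, rfl⟩ ?_
  · rintro _ ⟨φ, hφ, rfl⟩
    refine add_nonneg (Real.sSup_nonneg ?_) (Real.sSup_nonneg ?_) <;>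
      rintro _ ⟨p, hp, -, rfl⟩ <;> refine expTest_nonneg hp fun ω => ?_
    · exact (hφ ω).1
    · linarith [(hφ ω).2]
  · exact add_le_add (Real.sSup_le (fun _ ⟨p, hp, hpc, hx⟩ => hx ▸ h₀ p hp hpc) ha)
      (Real.sSup_le (fun _ ⟨p, hp, hpρ, hx⟩ => hx ▸ h₁ p hp hpρ) hb)

lemma rhoStar_le {ρ : ℝ} (hρ : 0 ≤ ρ) (h : minimaxRisk m 𝕊 n ρ ≤ 1 / 2) : rhoStar m 𝕊 n ≤ ρ :=
  csInf_le ⟨0, fun _ h => h.1⟩ ⟨hρ, h⟩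

end Minimax

theorem statement_19_general {d : ℕ} (m : Fin d → ℕ)
    (𝕊 : Finset (Finset (Fin d))) (h𝕊 : 𝕊.Nonempty)
    (n : Finset (Fin d) → ℕ) (hn : ∀ S ∈ 𝕊, 0 < n S) :
    rhoStar m 𝕊 n ≤
      ∑ S ∈ 𝕊, Real.sqrt (((Fintype.card (Cell m S) : ℝ) - 1) / (n S : ℝ)) +
        2 * Real.sqrt (Real.log 2 * ∑ S ∈ 𝕊, 1 / (n S : ℝ)) := by
  set A := ∑ S ∈ 𝕊, √((Fintype.card (Cell m S) - 1) / n S)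
  set t := √(log 2 * ∑ S ∈ 𝕊, 1 / (n S : ℝ))
  let ψ : Samples m 𝕊 n → ℝ := fun ω => if A / 2 + t < Rix m 𝕊 (emp m 𝕊 n 0 ω) then 1 else 0
  have hψ : ∀ ω, ψ ω ∈ Set.Icc 0 1 := fun ω => by simp only [ψ]; split_ifs <;> norm_num
  have hdev : ∀ p, IsFamily m 𝕊 p → expTest m 𝕊 n p
      (fun ω => if A / 2 + t ≤ tvSum m 𝕊 (emp m 𝕊 n 0 ω) p then 1 else 0) ≤ 1 / 4 :=
    fun p hp => expTest_tvSum_emp_ge_le h𝕊 hn hp 0 (le_of_eq (by ring))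
  have htypeI : ∀ p, IsFamily m 𝕊 p → Compatible m 𝕊 p → expTest m 𝕊 n p ψ ≤ 1 / 4 := by
    refine fun p hp hpc => (expTest_mono hp fun ω => ?_).trans (hdev p hp)
    have := Rix_le_tvSum_of_compatible h𝕊 hp hpc (emp_isFamily hn 0 ω)
    simp only [ψ]
    split_ifs <;> linarith
  have htypeII : ∀ p, IsFamily m 𝕊 p → A + 2 * t ≤ Rix m 𝕊 p →
      expTest m 𝕊 n p (fun ω => 1 - ψ ω) ≤ 1 / 4 := by
    refine fun p hp hρ => (expTest_mono hp fun ω => ?_).trans (hdev p hp)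
    have := Rix_le_Rix_add_tvSum h𝕊 hp (emp_isFamily hn 0 ω)
    rw [tvSum_comm] at this
    simp only [ψ]
    split_ifs <;> linarith
  have hA : 0 ≤ A := sum_nonneg fun _ _ => sqrt_nonneg _
  refine rhoStar_le (add_nonneg hA (mul_nonneg zero_le_two (sqrt_nonneg _))) ?_
  linarith [minimaxRisk_le (a := 1 / 4) (b := 1 / 4) ψ hψ (by norm_num) (by norm_num)
    htypeI htypeII]

/-- upper bound on the minimax testing radius. -/
theorem statement_19 {d : ℕ} (m : Fin d → ℕ) (hm : ∀ j, 0 < m j)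
    (𝕊 : Finset (Finset (Fin d))) (h𝕊 : 𝕊.Nonempty) (hSne : ∀ S ∈ 𝕊, S.Nonempty)
    (n : Finset (Fin d) → ℕ) (hn : ∀ S ∈ 𝕊, 0 < n S) :
    rhoStar m 𝕊 n ≤
      ∑ S ∈ 𝕊, Real.sqrt (((Fintype.card (Cell m S) : ℝ) - 1) / (n S : ℝ)) +
        2 * Real.sqrt (Real.log 2 * ∑ S ∈ 𝕊, 1 / (n S : ℝ)) :=
  statement_19_general m 𝕊 h𝕊 n hn
end
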